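/- arXiv:2405.12782 — 3 statements merged into one kernel-verified Lean document; each statement's English description precedes it below -/
import Mathlib

section
/- For every p = 6^ℓ with ℓ ≥ 1 and every positive integer n, the map f_p : 𝕋 → 𝕋, x ↦ px, satisfies s_{f_p}(n, 1/3) ≤ 3^n. -/
/-- The `×p` map `x ↦ p • x` on the circle `ℝ/ℤ`. -/
noncomputable def timesMap (p : ℕ) : UnitAddCircle → UnitAddCircle := fun x => p • x

/-- An `(n, ε)`-separated set (as a finset) for the map `f` on the circle `ℝ/ℤ`. -/
def IsSeparatedSet (f : UnitAddCircle → UnitAddCircle) (n : ℕ) (ε : ℝ)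
    (A : Finset UnitAddCircle) : Prop :=
  ∀ x ∈ A, ∀ y ∈ A, x ≠ y → ∃ i < n, ε < dist (f^[i] x) (f^[i] y)

/-!
Cut the circle into the `k` half-open arcs `[j/k, (j+1)/k)`, each of diameter `< 1/k`, and record
for every point the arcs visited by its first `n` iterates. Two points with the same itinerary stay
`1/k`-close for `n` steps, so an `(n, 1/k)`-separated set embeds into the `k ^ n` itineraries.
-/

theorem AddCircle.dist_coe_le_abs_sub (p a b : ℝ) : dist (a : AddCircle p) b ≤ |a - b| := by
  rw [dist_eq_norm, ← AddCircle.coe_sub]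
  exact QuotientAddGroup.norm_mk_le_norm

noncomputable def arcIndex (k : ℕ) (x : UnitAddCircle) : ℤ :=
  ⌊k * (AddCircle.equivIco 1 0 x : ℝ)⌋

section arcIndex

variable {k : ℕ}

theorem arcIndex_mem_Ico (hk : 0 < k) (x : UnitAddCircle) :
    arcIndex k x ∈ Finset.Ico 0 (k : ℤ) := by
  obtain ⟨h0, h1⟩ := (AddCircle.equivIco 1 0 x).2
  have hk' : (0 : ℝ) < k := by exact_mod_cast hk
  rw [Finset.mem_Ico, arcIndex, Int.floor_nonneg, Int.floor_lt]
  push_cast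
  constructor <;> nlinarith

theorem dist_lt_of_arcIndex_eq (hk : 0 < k) {x y : UnitAddCircle}
    (h : arcIndex k x = arcIndex k y) : dist x y < 1 / k := by
  set a : ℝ := (AddCircle.equivIco 1 0 x : ℝ)
  set b : ℝ := (AddCircle.equivIco 1 0 y : ℝ)
  have hk' : (0 : ℝ) < k := by exact_mod_cast hk
  have hab : |k * a - k * b| < 1 := Int.abs_sub_lt_one_of_floor_eq_floor h
  rw [← mul_sub, abs_mul, Nat.abs_cast] at hab
  calc dist x y = dist (a : UnitAddCircle) b := by
        rw [← (AddCircle.equivIco 1 0).symm_apply_apply x,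
          ← (AddCircle.equivIco 1 0).symm_apply_apply y]
        rfl
    _ ≤ |a - b| := AddCircle.dist_coe_le_abs_sub 1 a b
    _ < 1 / k := by rw [lt_div_iff₀ hk']; linarith

end arcIndex

noncomputable def itinerary (f : UnitAddCircle → UnitAddCircle) (k n : ℕ) (x : UnitAddCircle) :
    Fin n → ℤ :=
  fun i => arcIndex k (f^[i] x)

theorem IsSeparatedSet.injOn_itinerary {f : UnitAddCircle → UnitAddCircle} {k n : ℕ}
    (hk : 0 < k) {A : Finset UnitAddCircle} (hA : IsSeparatedSet f n (1 / k) A) :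
    Set.InjOn (itinerary f k n) A := by
  intro x hx y hy hxy
  by_contra hne
  obtain ⟨i, hi, hsep⟩ := hA x hx y hy hne
  exact (dist_lt_of_arcIndex_eq hk (congrFun hxy ⟨i, hi⟩)).not_gt hsep

theorem IsSeparatedSet.card_le_pow {f : UnitAddCircle → UnitAddCircle} {k n : ℕ} (hk : 0 < k)
    {A : Finset UnitAddCircle} (hA : IsSeparatedSet f n (1 / k) A) : A.card ≤ k ^ n :=
  calc A.card ≤ (Fintype.piFinset fun _ : Fin n => Finset.Ico 0 (k : ℤ)).card :=
        Finset.card_le_card_of_injOn (itinerary f k n)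
          (fun _ _ => Fintype.mem_piFinset.2 fun _ => arcIndex_mem_Ico hk _)
          (hA.injOn_itinerary hk)
    _ = k ^ n := by simp

theorem separated_card_le_three_pow_timesMap_general (ℓ : ℕ) (n : ℕ)
    (A : Finset UnitAddCircle) (hA : IsSeparatedSet (timesMap (6 ^ ℓ)) n (1/3) A) :
    A.card ≤ 3 ^ n :=
  IsSeparatedSet.card_le_pow (k := 3) three_pos (by exact_mod_cast hA)

/-- **Proposition 2.3.** For `p = 6^ℓ` with `ℓ ≥ 1` and every positive integer `n`,
the map `f_p : x ↦ px` on the circle satisfies `s_{f_p}(n, 1/3) ≤ 3^n`. -/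
theorem separated_card_le_three_pow_timesMap (ℓ : ℕ) (hℓ : 1 ≤ ℓ) (n : ℕ) (hn : 0 < n)
    (A : Finset UnitAddCircle) (hA : IsSeparatedSet (timesMap (6 ^ ℓ)) n (1/3) A) :
    A.card ≤ 3 ^ n :=
  separated_card_le_three_pow_timesMap_general ℓ n A hA
end

section
/- Let g : 𝕋 → 𝕋 be a continuous map, let n be a positive integer, and let ε > 0. Then there exists a positive integer p_0 such that for every integer p ≥ p_0, s_g(n, ε) ≤ s_{f_p}(n, ε). -/
open Filter

theorem exists_card_le_of_pairwise_le_dist {X : Type*} [PseudoMetricSpace X] [CompactSpace X]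
    {δ : ℝ} (hδ : 0 < δ) :
    ∃ N : ℕ, ∀ A : Finset X, (A : Set X).Pairwise (fun x y => δ ≤ dist x y) → A.card ≤ N := by
  obtain ⟨t, -, ht, hcover⟩ :=
    finite_cover_balls_of_compact (isCompact_univ (X := X)) (half_pos hδ)
  have hcenter : ∀ x, ∃ c ∈ ht.toFinset, dist x c < δ / 2 := fun x => by
    simpa using hcover (Set.mem_univ x)
  choose c hct hc using hcenter
  refine ⟨ht.toFinset.card, fun A hA => Finset.card_le_card_of_injOn c (fun x _ => hct x) ?_⟩
  intro x hx y hy hxy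
  by_contra hne
  have := dist_triangle_right x y (c x)
  linarith [hA hx hy hne, hc x, hc y, hxy ▸ hc y]

theorem exists_forall_dist_iterate_le {α : Type*} [Dist α] {f : α → α} {r : ℝ}
    (hf : ∀ y z, ∃ x, f x = z ∧ dist x y ≤ r) (n : ℕ) (y : ℕ → α) :
    ∃ x, ∀ i < n, dist (f^[i] x) (y i) ≤ r := by
  induction n generalizing y with
  | zero => exact ⟨y 0, by simp⟩
  | succ n ih =>
    obtain ⟨x', hx'⟩ := ih (fun i => y (i + 1))
    obtain ⟨x, rfl, hx⟩ := hf (y 0) x'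
    refine ⟨x, fun i hi => ?_⟩
    cases i with
    | zero => simpa using hx
    | succ i => simpa [Function.iterate_succ_apply] using hx' i (by omega)

theorem exists_timesMap_eq_dist_le {p : ℕ} (hp : 0 < p) (y z : UnitAddCircle) :
    ∃ x, timesMap p x = z ∧ dist x y ≤ 1 / (2 * p) := by
  obtain ⟨s, rfl⟩ := QuotientAddGroup.mk_surjective z
  obtain ⟨t, rfl⟩ := QuotientAddGroup.mk_surjective y
  have hp' : (0 : ℝ) < p := by exact_mod_cast hp
  -- `r ≡ s - p t` mod 1 makes `t + r / p` a preimage of `s`; rounding makes `|r| ≤ 1 / 2`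
  set r := s - p * t - round (s - p * t)
  refine ⟨((t + r / p : ℝ) : UnitAddCircle), ?_, ?_⟩
  · have : (p : ℝ) * (t + r / p) = s + (-round (s - p * t) : ℤ) • (1 : ℝ) := by
      simp only [r, zsmul_eq_mul, mul_one, Int.cast_neg]
      field_simp
      ring
    rw [timesMap, ← AddCircle.coe_nsmul, nsmul_eq_mul, this, AddCircle.coe_add,
      AddCircle.coe_zsmul, AddCircle.coe_period, smul_zero, add_zero]
  · calc dist ((t + r / p : ℝ) : UnitAddCircle) t ≤ |t + r / p - t| := by
          rw [dist_eq_norm, ← AddCircle.coe_sub]; exact QuotientAddGroup.norm_mk_le_norm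
      _ = |s - p * t - round (s - p * t)| / p := by
          rw [add_sub_cancel_left, abs_div, abs_of_pos hp']
      _ ≤ 1 / 2 / p := by gcongr; exact abs_sub_round _
      _ = 1 / (2 * p) := by ring

theorem IsSeparatedSet.exists_gt {f : UnitAddCircle → UnitAddCircle} {n : ℕ} {ε : ℝ}
    {A : Finset UnitAddCircle} (hA : IsSeparatedSet f n ε A) :
    ∃ ε' > ε, IsSeparatedSet f n ε' A := by
  refine Eventually.exists_gt ?_
  simp only [IsSeparatedSet, eventually_all_finset, eventually_imp_distrib_left]
  intro x hx y hy hxy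
  obtain ⟨i, hi, hlt⟩ := hA x hx y hy hxy
  exact (eventually_lt_nhds hlt).mono fun ε' h => ⟨i, hi, h⟩

theorem exists_pos_le_dist_of_isSeparatedSet {g : UnitAddCircle → UnitAddCircle}
    (hg : Continuous g) (n : ℕ) {ε : ℝ} (hε : 0 < ε) :
    ∃ δ > 0, ∀ A : Finset UnitAddCircle, IsSeparatedSet g n ε A →
      (A : Set UnitAddCircle).Pairwise fun x y => δ ≤ dist x y := by
  have hunif : UniformContinuous fun x (i : Fin n) => g^[i] x :=
    CompactSpace.uniformContinuous_of_continuous (continuous_pi fun i => hg.iterate i)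
  obtain ⟨δ, hδ, hclose⟩ := Metric.uniformContinuous_iff.1 hunif ε hε
  refine ⟨δ, hδ, fun A hA x hx y hy hxy => not_lt.1 fun hlt => ?_⟩
  obtain ⟨i, hi, hsep⟩ := hA x hx y hy hxy
  exact lt_asymm hsep <|
    (dist_le_pi_dist (fun j : Fin n => g^[j] x) (fun j => g^[j] y) ⟨i, hi⟩).trans_lt (hclose hlt)

theorem exists_isSeparatedSet_forall_card_le {g : UnitAddCircle → UnitAddCircle}
    (hg : Continuous g) (n : ℕ) {ε : ℝ} (hε : 0 < ε) :
    ∃ A₀, IsSeparatedSet g n ε A₀ ∧ ∀ A, IsSeparatedSet g n ε A → A.card ≤ A₀.card := by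
  obtain ⟨δ, hδ, hsep⟩ := exists_pos_le_dist_of_isSeparatedSet hg n hε
  obtain ⟨N, hN⟩ := exists_card_le_of_pairwise_le_dist (X := UnitAddCircle) hδ
  set S := {k | ∃ A, IsSeparatedSet g n ε A ∧ A.card = k}
  have hbdd : BddAbove S := ⟨N, by rintro _ ⟨A, hA, rfl⟩; exact hN A (hsep A hA)⟩
  obtain ⟨A₀, hA₀, hcard⟩ := Nat.sSup_mem (s := S) ⟨0, ∅, by simp [IsSeparatedSet]⟩ hbdd
  exact ⟨A₀, hA₀, fun A hA => hcard ▸ le_csSup hbdd ⟨A, hA, rfl⟩⟩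

theorem IsSeparatedSet.image_of_forall_dist_iterate_le {f g : UnitAddCircle → UnitAddCircle}
    {n : ℕ} {ε ε' r : ℝ} {A : Finset UnitAddCircle} (hA : IsSeparatedSet g n ε' A)
    (hε : 0 ≤ ε) (hr : ε + 2 * r ≤ ε') {φ : UnitAddCircle → UnitAddCircle}
    (hφ : ∀ a ∈ A, ∀ i < n, dist (f^[i] (φ a)) (g^[i] a) ≤ r) :
    IsSeparatedSet f n ε (A.image φ) ∧ (A.image φ).card = A.card := by
  have hsep : ∀ x ∈ A, ∀ y ∈ A, x ≠ y → ∃ i < n, ε < dist (f^[i] (φ x)) (f^[i] (φ y)) := by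
    intro x hx y hy hxy
    obtain ⟨i, hi, hlt⟩ := hA x hx y hy hxy
    refine ⟨i, hi, ?_⟩
    have := dist_triangle4 (g^[i] x) (f^[i] (φ x)) (f^[i] (φ y)) (g^[i] y)
    linarith [dist_comm (g^[i] x) (f^[i] (φ x)), hφ x hx i hi, hφ y hy i hi]
  refine ⟨?_, Finset.card_image_of_injOn fun x hx y hy hφxy => by_contra fun hxy => ?_⟩
  · simp only [IsSeparatedSet, Finset.mem_image]
    rintro _ ⟨x, hx, rfl⟩ _ ⟨y, hy, rfl⟩ hxy
    exact hsep x hx y hy (ne_of_apply_ne φ hxy)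
  · obtain ⟨i, -, hlt⟩ := hsep x hx y hy hxy
    rw [hφxy, dist_self] at hlt
    exact hlt.not_ge hε

theorem separated_le_of_timesMap_general (g : UnitAddCircle → UnitAddCircle)
    (hg : Continuous g) (n : ℕ) (ε : ℝ) (hε : 0 < ε) :
    ∃ p₀ : ℕ, 0 < p₀ ∧ ∀ p : ℕ, p₀ ≤ p →
      ∀ A : Finset UnitAddCircle, IsSeparatedSet g n ε A →
        ∃ B : Finset UnitAddCircle, IsSeparatedSet (timesMap p) n ε B ∧
          A.card ≤ B.card := by
  obtain ⟨A₀, hA₀, hA₀_max⟩ := exists_isSeparatedSet_forall_card_le hg n hε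
  obtain ⟨ε', hεε', hA₀'⟩ := hA₀.exists_gt
  obtain ⟨N, hN⟩ := exists_nat_one_div_lt (sub_pos.2 hεε')
  refine ⟨N + 1, N.succ_pos, fun p hp A hA => ?_⟩
  have hp₀ : 0 < p := N.succ_pos.trans_le hp
  have hr : ε + 2 * (1 / (2 * p)) ≤ ε' := calc
    ε + 2 * (1 / (2 * p)) = ε + 1 / p := by field_simp
    _ ≤ ε + 1 / (N + 1) := by gcongr; exact_mod_cast hp
    _ ≤ ε' := by linarith
  choose φ hφ using fun a => exists_forall_dist_iterate_le (exists_timesMap_eq_dist_le hp₀) n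
    fun i => g^[i] a
  obtain ⟨hB, hcard⟩ := hA₀'.image_of_forall_dist_iterate_le hε.le hr fun a _ => hφ a
  exact ⟨_, hB, hcard ▸ hA₀_max A hA⟩

/-- **Proposition 2.6.** Let `g : 𝕋 → 𝕋` be continuous, `n` a positive integer and
`ε > 0`.  Then for all sufficiently large `p` we have `s_g(n, ε) ≤ s_{f_p}(n, ε)`:
every `(n, ε)`-separated set for `g` is matched by one for `f_p` of at least the
same cardinality. -/
theorem separated_le_of_timesMap (g : UnitAddCircle → UnitAddCircle)
    (hg : Continuous g) (n : ℕ) (hn : 0 < n) (ε : ℝ) (hε : 0 < ε) :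
    ∃ p₀ : ℕ, 0 < p₀ ∧ ∀ p : ℕ, p₀ ≤ p →
      ∀ A : Finset UnitAddCircle, IsSeparatedSet g n ε A →
        ∃ B : Finset UnitAddCircle, IsSeparatedSet (timesMap p) n ε B ∧
          A.card ≤ B.card :=
  separated_le_of_timesMap_general g hg n ε hε
end

section
/- For every positive integer n and every continuous map f : 𝕋 → 𝕋, the Ramsey number satisfies R(3, n) > s_f(n, 1/3); that is, there is a coloring of the edges of the complete graph on s_f(n, 1/3) vertices with n colors containing no monochromatic triangle. -/
/-!
Colour the edge between two points of an `(n, 1/3)`-separated set by the first time `i < n` at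
which their orbits are more than `1/3` apart. A monochromatic triangle would give three points
of the circle, the `i`-th iterates of its vertices, that are pairwise more than `1/3` apart;
but the three pairwise distances of any three points of `ℝ/ℤ` add up to at most `1`, the
length of the circle.
-/

namespace AddCircle

theorem norm_coe_le_abs {p : ℝ} (x : ℝ) : ‖(x : AddCircle p)‖ ≤ |x| :=
  QuotientAddGroup.norm_mk_le_norm

variable {p : ℝ} [Fact (0 < p)]

theorem exists_coe_eq_mem_Ico (x : AddCircle p) : ∃ a ∈ Set.Ico 0 p, (a : AddCircle p) = x :=
  ⟨equivIco p 0 x, by simpa using (equivIco p 0 x).2, coe_equivIco⟩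

theorem norm_add_norm_sub_add_norm_le (x y : AddCircle p) : ‖x‖ + ‖y - x‖ + ‖y‖ ≤ p := by
  obtain ⟨a, ⟨ha₀, ha⟩, rfl⟩ := exists_coe_eq_mem_Ico x
  obtain ⟨b, ⟨hb₀, hb⟩, rfl⟩ := exists_coe_eq_mem_Ico y
  have hsub : ‖(b : AddCircle p) - a‖ ≤ |b - a| := by
    rw [← coe_sub]; exact norm_coe_le_abs _
  have hwrap (t : ℝ) : ‖(t : AddCircle p)‖ ≤ |t - p| := by
    simpa [coe_sub, coe_period] using norm_coe_le_abs (p := p) (t - p)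
  rcases le_total a b with hab | hab
  · have h₁ := norm_coe_le_abs (p := p) a
    have h₂ := hwrap b
    rw [abs_of_nonneg ha₀] at h₁
    rw [abs_of_nonneg (by linarith)] at hsub
    rw [abs_of_nonpos (by linarith)] at h₂
    linarith
  · have h₁ := hwrap a
    have h₂ := norm_coe_le_abs (p := p) b
    rw [abs_of_nonneg hb₀] at h₂
    rw [abs_of_nonpos (by linarith)] at hsub h₁
    linarith

theorem dist_add_dist_add_dist_le (u v w : AddCircle p) :
    dist u v + dist v w + dist w u ≤ p := by
  have := norm_add_norm_sub_add_norm_le (v - u) (w - u)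
  rw [sub_sub_sub_cancel_right] at this
  rwa [dist_comm u v, dist_comm v w, dist_eq_norm, dist_eq_norm, dist_eq_norm]

end AddCircle

section SeparationTime

variable {X : Type*} [PseudoMetricSpace X] (f : X → X) (ε : ℝ)

/-- The first time at which the orbits of `x` and `y` are more than `ε` apart
(`0` if they never are). -/
noncomputable def separationTime (x y : X) : ℕ :=
  sInf {i | ε < dist (f^[i] x) (f^[i] y)}

theorem separationTime_comm (x y : X) : separationTime f ε x y = separationTime f ε y x := by
  simp only [separationTime, dist_comm]

theorem separationTime_self (x : X) : separationTime f ε x x = 0 := by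
  by_cases hε : ε < 0 <;> simp [separationTime, hε]

variable {f ε}

theorem separationTime_lt {x y : X} {n : ℕ} (h : ∃ i < n, ε < dist (f^[i] x) (f^[i] y)) :
    separationTime f ε x y < n :=
  let ⟨_, hi, hsep⟩ := h
  (Nat.sInf_le hsep).trans_lt hi

theorem lt_dist_iterate_separationTime {x y : X} (h : ∃ i, ε < dist (f^[i] x) (f^[i] y)) :
    ε < dist (f^[separationTime f ε x y] x) (f^[separationTime f ε x y] y) :=
  Nat.sInf_mem h

theorem exists_coloring_not_monochromatic_triangle
    (hX : ∀ u v w : X, dist u v ≤ ε ∨ dist v w ≤ ε ∨ dist u w ≤ ε) {n m : ℕ} (hn : 0 < n)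
    (x : Fin m → X) (hsep : ∀ i j, i ≠ j → ∃ k < n, ε < dist (f^[k] (x i)) (f^[k] (x j))) :
    ∃ c : Fin m → Fin m → Fin n, (∀ i j, c i j = c j i) ∧
      ¬ ∃ i j k : Fin m, i ≠ j ∧ j ≠ k ∧ i ≠ k ∧ c i j = c j k ∧ c i j = c i k := by
  have htime_lt (i j : Fin m) : separationTime f ε (x i) (x j) < n := by
    by_cases hij : i = j
    · rw [hij, separationTime_self]; exact hn
    · exact separationTime_lt (hsep i j hij)
  have hfar (i j : Fin m) (hij : i ≠ j) := lt_dist_iterate_separationTime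
    (let ⟨k, _, hk⟩ := hsep i j hij; ⟨k, hk⟩)
  refine ⟨fun i j => ⟨_, htime_lt i j⟩, fun i j => Fin.ext (separationTime_comm ..), ?_⟩
  rintro ⟨i, j, k, hij, hjk, hik, hij_jk, hij_ik⟩
  simp only [Fin.mk.injEq] at hij_jk hij_ik
  have hjk' := hfar j k hjk
  have hik' := hfar i k hik
  rw [← hij_jk] at hjk'
  rw [← hij_ik] at hik'
  rcases hX (f^[_] (x i)) (f^[_] (x j)) (f^[_] (x k)) with h | h | h
  · exact (hfar i j hij).not_ge h
  · exact hjk'.not_ge h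
  · exact hik'.not_ge h

end SeparationTime

theorem ramsey_three_gt_separated_general (n : ℕ) (hn : 0 < n)
    (f : UnitAddCircle → UnitAddCircle) (m : ℕ)
    (hm_ex : ∃ A : Finset UnitAddCircle, A.card = m ∧ IsSeparatedSet f n (1/3) A) :
    ∃ c : Fin m → Fin m → Fin n,
      (∀ i j, c i j = c j i) ∧
      ¬ ∃ x y z : Fin m, x ≠ y ∧ y ≠ z ∧ x ≠ z ∧
          c x y = c y z ∧ c x y = c x z := by
  obtain ⟨A, hcard, hsep⟩ := hm_ex
  let e : Fin m ≃ A := (A.equivFin.trans (finCongr hcard)).symm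
  have hthird (u v w : UnitAddCircle) :
      dist u v ≤ 1/3 ∨ dist v w ≤ 1/3 ∨ dist u w ≤ 1/3 := by
    have := AddCircle.dist_add_dist_add_dist_le u v w
    rw [dist_comm w u] at this
    by_contra! h
    linarith
  exact exists_coloring_not_monochromatic_triangle hthird hn (fun i => (e i : UnitAddCircle))
    fun i j hij => hsep _ (e i).2 _ (e j).2 (Subtype.coe_injective.ne (e.injective.ne hij))

/-- For every positive integer `n` and every continuous `f : 𝕋 → 𝕋`, the Ramsey
number satisfies `R(3, n) > s_f(n, 1/3)`: if `m = s_f(n, 1/3)` is the maximal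
cardinality of an `(n, 1/3)`-separated set, then there is an edge-coloring of the
complete graph on `m` vertices using `n` colors with no monochromatic triangle. -/
theorem ramsey_three_gt_separated (n : ℕ) (hn : 0 < n)
    (f : UnitAddCircle → UnitAddCircle) (hf : Continuous f) (m : ℕ)
    (hm_ex : ∃ A : Finset UnitAddCircle, A.card = m ∧ IsSeparatedSet f n (1/3) A)
    (hm_max : ∀ A : Finset UnitAddCircle, IsSeparatedSet f n (1/3) A → A.card ≤ m) :
    ∃ c : Fin m → Fin m → Fin n,
      (∀ i j, c i j = c j i) ∧
      ¬ ∃ x y z : Fin m, x ≠ y ∧ y ≠ z ∧ x ≠ z ∧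
          c x y = c y z ∧ c x y = c x z :=
  ramsey_three_gt_separated_general n hn f m hm_ex
end
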